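/- Let μ, ρ be probability measures on ℝ with finite first moments. Then AVaR_μ(λ) ≤ AVaR_ρ(λ) for all λ ∈ (0,1) if and only if C_μ(K) ≤ C_ρ(K) for all K ∈ ℝ. Consequently, ρ^HL dominates μ^HL stochastically if and only if ρ dominates μ in the increasing convex order. -/

import Mathlib

/-!
The tail quantile `q = tailQ ν` pushes Lebesgue measure on `(0, 1)` forward to `ν`, so
`C_ν(K) = ∫₀¹ (q u - K)⁺ du` and `l · AVaR_ν(l) = ∫₀ˡ q`. As `q` is antitone, these two functions
are convex duals of each other: `∫₀ˡ q = min_K (C_ν(K) + l K)`, attained at `K = q l`, and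
`C_ν(K) = max_{l ∈ [0, 1]} (∫₀ˡ q - l K)`, attained where `q` crosses `K`. This gives the first
equivalence.

The duality also shows that `AVaR_ν` is antitone on `(0, 1)`; it is also continuous there, so
`ν^HL([y, ∞))` is the length of the initial segment `{AVaR_ν ≥ y}`, and comparing these lengths
for all `y` is the same as comparing the AVaR curves pointwise. Finally, an increasing convex `g`
is approximated from below, up to a small error in `L¹(μ)`, by a chain of its tangent lines on a
fine grid of `[-r, r]`, i.e. by an increasing affine function plus a nonnegative combination of
calls, whose integrals are ordered by call dominance and the resulting order of the means.
-/

open MeasureTheory Set Filter Topology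

/-- Tail function `μ([x,∞))`. -/
noncomputable def tailFn (μ : Measure ℝ) (x : ℝ) : ℝ := (μ (Ici x)).toReal

/-- Tail quantile function: left-continuous inverse of the tail function. -/
noncomputable def tailQ (μ : Measure ℝ) (l : ℝ) : ℝ := sInf {x : ℝ | tailFn μ x < l}

/-- Call function `C_μ(K) = ∫ (s-K)⁺ μ(ds)`. -/
noncomputable def callFn (μ : Measure ℝ) (K : ℝ) : ℝ := ∫ s, max (s - K) 0 ∂μ

/-- Average Value at Risk at level `l`. -/
noncomputable def avar (μ : Measure ℝ) (l : ℝ) : ℝ := (1 / l) * ∫ u in (0 : ℝ)..l, tailQ μ u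

/-- Hardy–Littlewood transform of `μ`: the law of `AVaR_μ(ξ)` for `ξ` uniform on `[0,1]`. -/
noncomputable def hlTransform (μ : Measure ℝ) : Measure ℝ :=
  Measure.map (avar μ) (volume.restrict (Ioc (0 : ℝ) 1))

section Quantile

variable (ν : Measure ℝ)

lemma tailFn_antitone [IsFiniteMeasure ν] : Antitone (tailFn ν) := fun _ _ hxy =>
  ENNReal.toReal_mono (measure_ne_top _ _) (measure_mono (Ici_subset_Ici.2 hxy))

lemma ofReal_tailFn [IsFiniteMeasure ν] (x : ℝ) : ENNReal.ofReal (tailFn ν x) = ν (Ici x) :=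
  ENNReal.ofReal_toReal (measure_ne_top _ _)

lemma tailFn_le_one [IsProbabilityMeasure ν] (x : ℝ) : tailFn ν x ≤ 1 :=
  ENNReal.toReal_le_of_le_ofReal zero_le_one (by simpa using prob_le_one)

lemma tendsto_tailFn_atTop [IsFiniteMeasure ν] : Tendsto (tailFn ν) atTop (𝓝 0) := by
  have h := tendsto_measure_iInter_atTop (μ := ν) (fun x : ℝ => measurableSet_Ici.nullMeasurableSet)
    (fun _ _ hxy => Ici_subset_Ici.2 hxy) ⟨0, measure_ne_top _ _⟩
  rw [iInter_eq_empty_iff.2 fun x => ⟨x + 1, by simp⟩, measure_empty] at h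
  exact (ENNReal.tendsto_toReal ENNReal.zero_ne_top).comp h

lemma tendsto_tailFn_atBot [IsProbabilityMeasure ν] : Tendsto (tailFn ν) atBot (𝓝 1) := by
  have h := tendsto_measure_Ici_atBot ν
  rw [measure_univ] at h
  exact (ENNReal.tendsto_toReal ENNReal.one_ne_top).comp h

lemma exists_lt_tailFn_lt [IsFiniteMeasure ν] {x u : ℝ} (h : tailFn ν x < u) :
    ∃ y < x, tailFn ν y < u := by
  obtain ⟨s, hs_mono, hs, hlim⟩ := exists_seq_strictMono_tendsto' (sub_one_lt x)
  have hinter : ⋂ n, Ici (s n) = Ici x := by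
    ext y
    simp only [mem_iInter, mem_Ici]
    exact ⟨fun hy => le_of_tendsto' hlim hy, fun hy n => (hs n).2.le.trans hy⟩
  have hmeas := tendsto_measure_iInter_atTop (μ := ν) (fun n => measurableSet_Ici.nullMeasurableSet)
    (fun m n hmn => Ici_subset_Ici.2 (hs_mono.monotone hmn)) ⟨0, measure_ne_top _ _⟩
  rw [hinter] at hmeas
  obtain ⟨n, hn⟩ := (((ENNReal.tendsto_toReal (measure_ne_top _ _)).comp hmeas).eventually
    (gt_mem_nhds h)).exists
  exact ⟨s n, (hs n).2, hn⟩

variable [IsProbabilityMeasure ν]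

lemma nonempty_tailFn_lt {u : ℝ} (hu : 0 < u) : {x | tailFn ν x < u}.Nonempty :=
  ((tendsto_tailFn_atTop ν).eventually (gt_mem_nhds hu)).exists

lemma bddBelow_tailFn_lt {u : ℝ} (hu : u < 1) : BddBelow {x | tailFn ν x < u} := by
  obtain ⟨b, hb⟩ := eventually_atBot.1 ((tendsto_tailFn_atBot ν).eventually (lt_mem_nhds hu))
  exact ⟨b, fun x hx => not_lt.1 fun hxb => (hb x hxb.le).not_gt hx⟩

lemma le_tailQ_iff {u : ℝ} (hu : u ∈ Ioo 0 1) (x : ℝ) : x ≤ tailQ ν u ↔ u ≤ tailFn ν x := by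
  constructor
  · intro hx
    by_contra! hlt
    obtain ⟨y, hyx, hy⟩ := exists_lt_tailFn_lt ν hlt
    exact (hx.trans (csInf_le (bddBelow_tailFn_lt ν hu.2) hy)).not_gt hyx
  · intro hx
    refine le_csInf (nonempty_tailFn_lt ν hu.1) fun y hy => ?_
    by_contra! hyx
    exact (hx.trans (tailFn_antitone ν hyx.le)).not_gt hy

lemma tailQ_antitoneOn : AntitoneOn (tailQ ν) (Ioo 0 1) := fun _ hu _ hv huv =>
  (le_tailQ_iff ν hu _).2 (huv.trans ((le_tailQ_iff ν hv _).1 le_rfl))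

lemma aemeasurable_tailQ : AEMeasurable (tailQ ν) (volume.restrict (Ioo 0 1)) :=
  aemeasurable_restrict_of_antitoneOn measurableSet_Ioo (tailQ_antitoneOn ν)

lemma map_tailQ : (volume.restrict (Ioo 0 1)).map (tailQ ν) = ν := by
  have : IsFiniteMeasure (volume.restrict (Ioo (0 : ℝ) 1)) :=
    isFiniteMeasure_restrict.2 measure_Ioo_lt_top.ne
  refine Measure.ext_of_Ici _ _ fun x => ?_
  have hpre : tailQ ν ⁻¹' Ici x ∩ Ioo 0 1 = Ioo 0 1 ∩ Iic (tailFn ν x) := by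
    ext u
    simp only [mem_inter_iff, mem_preimage, mem_Ici, mem_Iic]
    exact ⟨fun h => ⟨h.2, (le_tailQ_iff ν h.2 x).1 h.1⟩,
      fun h => ⟨(le_tailQ_iff ν h.1 x).2 h.2, h.1⟩⟩
  rw [Measure.map_apply_of_aemeasurable (aemeasurable_tailQ ν) measurableSet_Ici,
    Measure.restrict_apply' measurableSet_Ioo, hpre,
    measure_congr ((Ioo_ae_eq_Ioc (μ := volume)).inter (ae_eq_refl (Iic (tailFn ν x)))),
    Ioc_inter_Iic,
    min_eq_right (tailFn_le_one ν x), Real.volume_Ioc, sub_zero, ofReal_tailFn]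

end Quantile

lemma callFn_nonneg (ν : Measure ℝ) (K : ℝ) : 0 ≤ callFn ν K :=
  integral_nonneg fun _ => le_max_right _ _

lemma avar_le_avar_iff {μ ρ : Measure ℝ} {l : ℝ} (hl : 0 < l) :
    avar μ l ≤ avar ρ l ↔ ∫ u in 0..l, tailQ μ u ≤ ∫ u in 0..l, tailQ ρ u :=
  mul_le_mul_iff_of_pos_left (one_div_pos.2 hl)

section Duality

variable {ν : Measure ℝ} [IsProbabilityMeasure ν]

lemma integral_comp_tailQ {f : ℝ → ℝ} (hf : AEStronglyMeasurable f ν) :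
    ∫ u in 0..1, f (tailQ ν u) = ∫ s, f s ∂ν := by
  rw [intervalIntegral.integral_of_le zero_le_one, integral_Ioc_eq_integral_Ioo,
    ← integral_map (aemeasurable_tailQ ν) (by rwa [map_tailQ]), map_tailQ]

lemma intervalIntegrable_comp_tailQ {f : ℝ → ℝ} (hf : Integrable f ν) {a b : ℝ}
    (ha : a ∈ Icc 0 1) (hb : b ∈ Icc 0 1) :
    IntervalIntegrable (fun u => f (tailQ ν u)) volume a b := by
  refine IntervalIntegrable.mono_set (a := 0) (b := 1) ?_
    (uIcc_subset_uIcc (by rwa [uIcc_of_le zero_le_one]) (by rwa [uIcc_of_le zero_le_one]))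
  rw [intervalIntegrable_iff_integrableOn_Ioo_of_le zero_le_one]
  rw [← map_tailQ ν] at hf
  exact (integrable_map_measure hf.aestronglyMeasurable (aemeasurable_tailQ ν)).1 hf

lemma intervalIntegrable_max_tailQ_sub (hν : Integrable id ν) (K : ℝ) {a b : ℝ}
    (ha : a ∈ Icc 0 1) (hb : b ∈ Icc 0 1) :
    IntervalIntegrable (fun u => max (tailQ ν u - K) 0) volume a b :=
  intervalIntegrable_comp_tailQ (f := fun s => max (s - K) 0) (hν.sub (integrable_const K)).pos_part
    ha hb

lemma callFn_eq_intervalIntegral (K : ℝ) :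
    callFn ν K = ∫ u in 0..1, max (tailQ ν u - K) 0 :=
  (integral_comp_tailQ (by fun_prop)).symm

lemma integral_tailQ_le_callFn_add (hν : Integrable id ν) (K : ℝ) {l : ℝ} (hl : l ∈ Icc 0 1) :
    ∫ u in 0..l, tailQ ν u ≤ callFn ν K + l * K := by
  have h0 : (0 : ℝ) ∈ Icc 0 1 := left_mem_Icc.2 zero_le_one
  have hq : IntervalIntegrable (tailQ ν) volume 0 l := intervalIntegrable_comp_tailQ hν h0 hl
  calc ∫ u in 0..l, tailQ ν u = (∫ u in 0..l, (tailQ ν u - K)) + l * K := by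
        simp [intervalIntegral.integral_sub hq intervalIntegrable_const]
    _ ≤ (∫ u in 0..l, max (tailQ ν u - K) 0) + l * K := by
        gcongr
        exact intervalIntegral.integral_mono_on hl.1 (hq.sub intervalIntegrable_const)
          (intervalIntegrable_max_tailQ_sub hν K h0 hl) fun u _ => le_max_left _ _
    _ ≤ callFn ν K + l * K := by
        gcongr
        rw [callFn_eq_intervalIntegral]
        exact intervalIntegral.integral_mono_interval le_rfl hl.1 hl.2
          (ae_of_all _ fun u => le_max_right _ _)
          (intervalIntegrable_max_tailQ_sub hν K h0 (right_mem_Icc.2 zero_le_one))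

lemma callFn_eq_of_tailQ_cross (hν : Integrable id ν) {K l : ℝ} (hl : l ∈ Icc 0 1)
    (hlow : ∀ u ∈ Ioo 0 l, K ≤ tailQ ν u) (hup : ∀ u ∈ Ioo l 1, tailQ ν u ≤ K) :
    callFn ν K = (∫ u in 0..l, tailQ ν u) - l * K := by
  have h0 : (0 : ℝ) ∈ Icc 0 1 := left_mem_Icc.2 zero_le_one
  have h1 : (1 : ℝ) ∈ Icc 0 1 := right_mem_Icc.2 zero_le_one
  have hq : IntervalIntegrable (tailQ ν) volume 0 l := intervalIntegrable_comp_tailQ hν h0 hl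
  rw [callFn_eq_intervalIntegral, ← intervalIntegral.integral_add_adjacent_intervals
      (intervalIntegrable_max_tailQ_sub hν K h0 hl) (intervalIntegrable_max_tailQ_sub hν K hl h1),
    intervalIntegral.integral_congr_Ioo_of_le hl.1 (g := fun u => tailQ ν u - K)
      fun u hu => max_eq_left (sub_nonneg.2 (hlow u hu)),
    intervalIntegral.integral_congr_Ioo_of_le hl.2 (g := fun _ => 0)
      fun u hu => max_eq_right (sub_nonpos.2 (hup u hu)),
    intervalIntegral.integral_sub hq intervalIntegrable_const]
  simp

lemma callFn_tailQ_add (hν : Integrable id ν) {l : ℝ} (hl : l ∈ Ioo 0 1) :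
    callFn ν (tailQ ν l) + l * tailQ ν l = ∫ u in 0..l, tailQ ν u := by
  rw [callFn_eq_of_tailQ_cross hν (Ioo_subset_Icc_self hl)
    (fun u hu => tailQ_antitoneOn ν ⟨hu.1, hu.2.trans hl.2⟩ hl hu.2.le)
    (fun u hu => tailQ_antitoneOn ν hl ⟨hl.1.trans hu.1, hu.2⟩ hu.1.le)]
  ring

lemma exists_callFn_eq (hν : Integrable id ν) (K : ℝ) :
    ∃ l ∈ Icc (0 : ℝ) 1, callFn ν K = (∫ u in 0..l, tailQ ν u) - l * K := by
  set S : Set ℝ := insert 0 {u | u ∈ Ioo 0 1 ∧ K < tailQ ν u}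
  have hS_le : ∀ u ∈ S, u ≤ 1 := by
    rintro u (rfl | hu)
    exacts [zero_le_one, hu.1.2.le]
  have hbdd : BddAbove S := ⟨1, hS_le⟩
  have hL : sSup S ∈ Icc 0 1 :=
    ⟨le_csSup hbdd (mem_insert _ _), csSup_le (insert_nonempty _ _) hS_le⟩
  -- `sSup S` is the level at which the antitone `tailQ ν` crosses `K`.
  refine ⟨sSup S, hL, callFn_eq_of_tailQ_cross hν hL (fun u hu => ?_) (fun u hu => ?_)⟩
  · obtain ⟨v, hv, huv⟩ := exists_lt_of_lt_csSup (insert_nonempty _ _) hu.2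
    rcases hv with rfl | hv
    · exact absurd hu.1 huv.not_gt
    · exact hv.2.le.trans (tailQ_antitoneOn ν ⟨hu.1, huv.trans hv.1.2⟩ hv.1 huv.le)
  · by_contra! h
    exact (le_csSup hbdd (mem_insert_of_mem _ ⟨⟨hL.1.trans_lt hu.1, hu.2⟩, h⟩)).not_gt hu.1

lemma continuousOn_primitive_tailQ (hν : Integrable id ν) :
    ContinuousOn (fun l => ∫ u in 0..l, tailQ ν u) (Icc 0 1) := by
  have h := intervalIntegral.continuousOn_primitive_interval' (a := 0)
    (intervalIntegrable_comp_tailQ hν (left_mem_Icc.2 zero_le_one) (right_mem_Icc.2 zero_le_one))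
    left_mem_uIcc
  rwa [uIcc_of_le zero_le_one] at h

lemma continuousOn_avar (hν : Integrable id ν) : ContinuousOn (avar ν) (Ioo 0 1) :=
  (continuousOn_const.div continuousOn_id fun _ hl => hl.1.ne').mul
    ((continuousOn_primitive_tailQ hν).mono Ioo_subset_Icc_self)

/- By the duality, `avar ν l = min_K (callFn ν K / l + K)` is an infimum of functions that are
antitone in `l`. -/
lemma antitoneOn_avar (hν : Integrable id ν) : AntitoneOn (avar ν) (Ioo 0 1) := by
  intro u hu v hv huv
  have hweak := integral_tailQ_le_callFn_add hν (tailQ ν u) (Ioo_subset_Icc_self hv)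
  have hsharp := callFn_tailQ_add hν hu
  have hC := callFn_nonneg ν (tailQ ν u)
  simp only [avar]
  calc 1 / v * ∫ w in 0..v, tailQ ν w
      ≤ 1 / v * (callFn ν (tailQ ν u) + v * tailQ ν u) :=
        mul_le_mul_of_nonneg_left hweak (one_div_pos.2 hv.1).le
    _ = callFn ν (tailQ ν u) / v + tailQ ν u := by field_simp [hv.1.ne']
    _ ≤ callFn ν (tailQ ν u) / u + tailQ ν u := by gcongr; exact hu.1
    _ = 1 / u * ∫ w in 0..u, tailQ ν w := by rw [← hsharp]; field_simp [hu.1.ne']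

end Duality

section Comparison

variable {μ ρ : Measure ℝ} [IsProbabilityMeasure μ] [IsProbabilityMeasure ρ]

lemma integral_tailQ_le_of_callFn_le (hμ : Integrable id μ) (hρ : Integrable id ρ)
    (hcall : ∀ K, callFn μ K ≤ callFn ρ K) {l : ℝ} (hl : l ∈ Ioo 0 1) :
    ∫ u in 0..l, tailQ μ u ≤ ∫ u in 0..l, tailQ ρ u := by
  rw [← callFn_tailQ_add hρ hl]
  linarith [integral_tailQ_le_callFn_add hμ (tailQ ρ l) (Ioo_subset_Icc_self hl),
    hcall (tailQ ρ l)]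

lemma integral_tailQ_le_of_forall_Ioo (hμ : Integrable id μ) (hρ : Integrable id ρ)
    (h : ∀ l ∈ Ioo 0 1, ∫ u in 0..l, tailQ μ u ≤ ∫ u in 0..l, tailQ ρ u) :
    ∀ l ∈ Icc 0 1, ∫ u in 0..l, tailQ μ u ≤ ∫ u in 0..l, tailQ ρ u := by
  rw [← closure_Ioo zero_ne_one]
  exact le_on_closure h (by simpa using continuousOn_primitive_tailQ hμ)
    (by simpa using continuousOn_primitive_tailQ hρ)

lemma callFn_le_of_integral_tailQ_le (hμ : Integrable id μ) (hρ : Integrable id ρ)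
    (h : ∀ l ∈ Icc 0 1, ∫ u in 0..l, tailQ μ u ≤ ∫ u in 0..l, tailQ ρ u) (K : ℝ) :
    callFn μ K ≤ callFn ρ K := by
  obtain ⟨l, hl, hμl⟩ := exists_callFn_eq hμ K
  linarith [h l hl, integral_tailQ_le_callFn_add hρ K hl]

theorem avar_le_iff_callFn_le (hμ : Integrable id μ) (hρ : Integrable id ρ) :
    (∀ l ∈ Ioo (0 : ℝ) 1, avar μ l ≤ avar ρ l) ↔ ∀ K, callFn μ K ≤ callFn ρ K := by
  rw [forall₂_congr fun l hl => avar_le_avar_iff hl.1]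
  exact ⟨fun h => callFn_le_of_integral_tailQ_le hμ hρ (integral_tailQ_le_of_forall_Ioo hμ hρ h),
    fun h _ => integral_tailQ_le_of_callFn_le hμ hρ h⟩

lemma integral_id_le_of_callFn_le (hμ : Integrable id μ) (hρ : Integrable id ρ)
    (hcall : ∀ K, callFn μ K ≤ callFn ρ K) : ∫ x, x ∂μ ≤ ∫ x, x ∂ρ := by
  have h := integral_tailQ_le_of_forall_Ioo hμ hρ
    (fun _ => integral_tailQ_le_of_callFn_le hμ hρ hcall) 1 (right_mem_Icc.2 zero_le_one)
  rwa [integral_comp_tailQ (f := fun x => x) aestronglyMeasurable_id,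
    integral_comp_tailQ (f := fun x => x) aestronglyMeasurable_id] at h

end Comparison

lemma AntitoneOn.le_of_volume_inter_preimage_Ici_le {f g : ℝ → ℝ} {a b : ℝ}
    (hf : AntitoneOn f (Ioo a b)) (hg : AntitoneOn g (Ioo a b)) (hgc : ContinuousOn g (Ioo a b))
    (h : ∀ y, volume (Ioo a b ∩ f ⁻¹' Ici y) ≤ volume (Ioo a b ∩ g ⁻¹' Ici y))
    {l : ℝ} (hl : l ∈ Ioo a b) : f l ≤ g l := by
  by_contra! hlt
  obtain ⟨l', hl'g, hal', hl'l⟩ : ∃ l', g l' < f l ∧ l' ∈ Ioo a l :=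
    ((((hgc.continuousAt (isOpen_Ioo.mem_nhds hl)).eventually (gt_mem_nhds hlt)).filter_mono
      nhdsWithin_le_nhds).and (Ioo_mem_nhdsLT hl.1)).exists
  have hlower : Ioc a l ⊆ Ioo a b ∩ f ⁻¹' Ici (f l) := fun u hu =>
    ⟨⟨hu.1, hu.2.trans_lt hl.2⟩, hf ⟨hu.1, hu.2.trans_lt hl.2⟩ hl hu.2⟩
  have hupper : Ioo a b ∩ g ⁻¹' Ici (f l) ⊆ Ioo a l' := fun u hu =>
    ⟨hu.1.1, not_le.1 fun hl'u =>
      ((hg ⟨hal', hl'l.trans hl.2⟩ hu.1 hl'u).trans_lt hl'g).not_ge hu.2⟩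
  have hvol := (measure_mono hlower).trans ((h (f l)).trans (measure_mono hupper))
  rw [Real.volume_Ioc, Real.volume_Ioo, ENNReal.ofReal_le_ofReal_iff (by linarith)] at hvol
  linarith

section HardyLittlewood

variable {μ ρ : Measure ℝ} [IsProbabilityMeasure μ] [IsProbabilityMeasure ρ]

lemma hlTransform_Ici {ν : Measure ℝ} [IsProbabilityMeasure ν] (hν : Integrable id ν) (y : ℝ) :
    hlTransform ν (Ici y) = volume (Ioo 0 1 ∩ avar ν ⁻¹' Ici y) := by
  rw [hlTransform, ← Measure.restrict_congr_set Ioo_ae_eq_Ioc,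
    Measure.map_apply_of_aemeasurable ((continuousOn_avar hν).aemeasurable measurableSet_Ioo)
      measurableSet_Ici, Measure.restrict_apply' measurableSet_Ioo, inter_comm]

theorem hlTransform_le_iff_avar_le (hμ : Integrable id μ) (hρ : Integrable id ρ) :
    (∀ y, hlTransform μ (Ici y) ≤ hlTransform ρ (Ici y)) ↔
      ∀ l ∈ Ioo (0 : ℝ) 1, avar μ l ≤ avar ρ l := by
  simp only [hlTransform_Ici hμ, hlTransform_Ici hρ]
  exact ⟨fun h _ => (antitoneOn_avar hμ).le_of_volume_inter_preimage_Ici_le (antitoneOn_avar hρ)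
      (continuousOn_avar hρ) h,
    fun h y => measure_mono fun u hu => ⟨hu.1, (show y ≤ avar μ u from hu.2).trans (h u hu.1)⟩⟩

end HardyLittlewood

noncomputable def rightDeriv (g : ℝ → ℝ) (x : ℝ) : ℝ := derivWithin g (Ioi x) x

section RightDeriv

variable {g : ℝ → ℝ}

lemma rightDeriv_nonneg (hg : Monotone g) (x : ℝ) : 0 ≤ rightDeriv g x :=
  (hg.monotoneOn _).derivWithin_nonneg

lemma ConvexOn.monotone_rightDeriv (hc : ConvexOn ℝ univ g) : Monotone (rightDeriv g) :=
  fun x y hxy => hc.monotoneOn_rightDeriv (by simp) (by simp) hxy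

lemma ConvexOn.add_rightDeriv_mul_le (hc : ConvexOn ℝ univ g) (x y : ℝ) :
    g x + rightDeriv g x * (y - x) ≤ g y := by
  rcases lt_trichotomy x y with hxy | rfl | hyx
  · have h := hc.rightDeriv_le_slope_of_mem_interior (by simp) (mem_univ y) hxy
    rw [slope_def_field, le_div_iff₀ (sub_pos.2 hxy)] at h
    exact le_sub_iff_add_le'.1 h
  · simp
  · have h := (hc.slope_le_leftDeriv_of_mem_interior (mem_univ y) (by simp) hyx).trans
      (hc.leftDeriv_le_rightDeriv_of_mem_interior (by simp))
    rw [slope_def_field, div_le_iff₀ (sub_pos.2 hyx)] at h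
    change _ ≤ rightDeriv g x * _ at h
    linarith

lemma ConvexOn.le_add_rightDeriv_mul (hc : ConvexOn ℝ univ g) {a x b : ℝ} (hax : a < x)
    (hxb : x ≤ b) : g x ≤ g a + rightDeriv g b * (x - a) := by
  have h := ((hc.slope_le_leftDeriv_of_mem_interior (mem_univ a) (by simp) hax).trans
      (hc.leftDeriv_le_rightDeriv_of_mem_interior (by simp))).trans (hc.monotone_rightDeriv hxb)
  rw [slope_def_field, div_le_iff₀ (sub_pos.2 hax)] at h
  linarith

end RightDeriv

/- On `[t j, t (j + 1)]` this is affine with slope `rightDeriv g (t j)`; as an increasing affine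
function plus a nonnegative combination of calls, its integral is monotone under call dominance. -/
noncomputable def tangentChain (g : ℝ → ℝ) (t : ℕ → ℝ) (N : ℕ) (x : ℝ) : ℝ :=
  g (t 0) + rightDeriv g (t 0) * (x - t 0) +
    ∑ j ∈ Finset.range N, (rightDeriv g (t (j + 1)) - rightDeriv g (t j)) * max (x - t (j + 1)) 0

section TangentChain

variable {g : ℝ → ℝ} {t : ℕ → ℝ}

lemma tangentChain_zero (x : ℝ) :
    tangentChain g t 0 x = g (t 0) + rightDeriv g (t 0) * (x - t 0) := by
  simp [tangentChain]

lemma tangentChain_succ (N : ℕ) (x : ℝ) :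
    tangentChain g t (N + 1) x = tangentChain g t N x +
      (rightDeriv g (t (N + 1)) - rightDeriv g (t N)) * max (x - t (N + 1)) 0 := by
  simp only [tangentChain, Finset.sum_range_succ]
  ring

lemma tangentChain_succ_of_le {N : ℕ} {x : ℝ} (hx : x ≤ t (N + 1)) :
    tangentChain g t (N + 1) x = tangentChain g t N x := by
  rw [tangentChain_succ, max_eq_right (sub_nonpos.2 hx), mul_zero, add_zero]

lemma tangentChain_of_le (ht : Monotone t) {x : ℝ} (hx : x ≤ t 0) (N : ℕ) :
    tangentChain g t N x = g (t 0) + rightDeriv g (t 0) * (x - t 0) := by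
  induction N with
  | zero => exact tangentChain_zero x
  | succ N ih => rw [tangentChain_succ_of_le (hx.trans (ht (Nat.zero_le _))), ih]

lemma tangentChain_of_ge (ht : Monotone t) {N : ℕ} {x : ℝ} (hx : t N ≤ x) :
    tangentChain g t N x = tangentChain g t N (t N) + rightDeriv g (t N) * (x - t N) := by
  induction N generalizing x with
  | zero => simp only [tangentChain_zero]; ring
  | succ N ih =>
    have hN : t N ≤ t (N + 1) := ht N.le_succ
    rw [tangentChain_succ, tangentChain_succ_of_le le_rfl, ih (hN.trans hx), ih hN,
      max_eq_left (sub_nonneg.2 hx)]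
    ring

lemma tangentChain_le (hc : ConvexOn ℝ univ g) (ht : Monotone t) (N : ℕ) (x : ℝ) :
    tangentChain g t N x ≤ g x := by
  induction N generalizing x with
  | zero => rw [tangentChain_zero]; exact hc.add_rightDeriv_mul_le _ _
  | succ N ih =>
    rcases le_or_gt x (t (N + 1)) with hx | hx
    · rw [tangentChain_succ_of_le hx]
      exact ih x
    · rw [tangentChain_of_ge ht hx.le, tangentChain_succ_of_le le_rfl]
      linarith [ih (t (N + 1)), hc.add_rightDeriv_mul_le (t (N + 1)) x]

lemma sub_tangentChain_le (hc : ConvexOn ℝ univ g) (ht : Monotone t) {δ : ℝ}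
    (hδ : ∀ j, t (j + 1) - t j ≤ δ) {N : ℕ} {x : ℝ} (hx : x ∈ Icc (t 0) (t N)) :
    g x - tangentChain g t N x ≤ δ * (rightDeriv g (t N) - rightDeriv g (t 0)) := by
  induction N generalizing x with
  | zero =>
    obtain rfl : x = t 0 := le_antisymm hx.2 hx.1
    simp [tangentChain_zero]
  | succ N ih =>
    have hδ0 : 0 ≤ δ := (sub_nonneg.2 (ht N.le_succ)).trans (hδ N)
    have hD : rightDeriv g (t N) ≤ rightDeriv g (t (N + 1)) := hc.monotone_rightDeriv (ht N.le_succ)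
    rw [tangentChain_succ_of_le hx.2]
    rcases le_or_gt x (t N) with hxN | hxN
    · linarith [ih ⟨hx.1, hxN⟩, mul_le_mul_of_nonneg_left hD hδ0]
    · rw [tangentChain_of_ge ht hxN.le]
      have hstep : (rightDeriv g (t (N + 1)) - rightDeriv g (t N)) * (x - t N) ≤
          (rightDeriv g (t (N + 1)) - rightDeriv g (t N)) * δ :=
        mul_le_mul_of_nonneg_left (by linarith [hδ N, hx.2]) (sub_nonneg.2 hD)
      linarith [ih ⟨ht (Nat.zero_le N), le_rfl⟩, hc.le_add_rightDeriv_mul hxN hx.2]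

end TangentChain

section IncreasingConvexOrder

variable {g : ℝ → ℝ} {t : ℕ → ℝ} {ν : Measure ℝ}

lemma integrable_affine_add_sum_call {ι : Type*} [IsFiniteMeasure ν]
    (hν : Integrable id ν) (α β a : ℝ) (s : Finset ι) (c k : ι → ℝ) :
    Integrable (fun x => α + β * (x - a) + ∑ j ∈ s, c j * max (x - k j) 0) ν :=
  ((integrable_const α).add ((hν.sub (integrable_const a)).const_mul β)).add
    (integrable_finsetSum s fun j _ => ((hν.sub (integrable_const (k j))).pos_part).const_mul (c j))

lemma integral_affine_add_sum_call {ι : Type*} [IsProbabilityMeasure ν]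
    (hν : Integrable id ν) (α β a : ℝ) (s : Finset ι) (c k : ι → ℝ) :
    ∫ x, (α + β * (x - a) + ∑ j ∈ s, c j * max (x - k j) 0) ∂ν =
      α + β * ((∫ x, x ∂ν) - a) + ∑ j ∈ s, c j * callFn ν (k j) := by
  have hid : Integrable (fun x : ℝ => x) ν := hν
  have hlin : Integrable (fun x : ℝ => β * (x - a)) ν := (hid.sub (integrable_const a)).const_mul β
  have hpayoff : ∀ j, Integrable (fun x => c j * max (x - k j) 0) ν := fun j =>
    ((hid.sub (integrable_const (k j))).pos_part).const_mul (c j)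
  have haff : Integrable (fun x : ℝ => α + β * (x - a)) ν := (integrable_const α).add hlin
  have hsum : Integrable (fun x => ∑ j ∈ s, c j * max (x - k j) 0) ν :=
    integrable_finsetSum s fun j _ => hpayoff j
  rw [integral_add haff hsum,
    integral_add (integrable_const α) hlin, integral_finsetSum s fun j _ => hpayoff j,
    integral_const_mul, integral_sub hid (integrable_const a)]
  simp [callFn, integral_const_mul]

lemma tendsto_setIntegral_compl_Icc {H : ℝ → ℝ} (hH : Integrable H ν) :
    Tendsto (fun r : ℝ => ∫ x in (Icc (-r) r)ᶜ, H x ∂ν) atTop (𝓝 0) := by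
  have h := tendsto_setIntegral_of_antitone (μ := ν) (f := H) (s := fun r : ℝ => (Icc (-r) r)ᶜ)
    (fun _ => measurableSet_Icc.compl)
    (fun _ _ hrs => compl_subset_compl.2 (Icc_subset_Icc (neg_le_neg hrs) hrs)) ⟨0, hH.integrableOn⟩
  rwa [iInter_eq_empty_iff.2 fun x => ⟨|x|, by simp [neg_abs_le, le_abs_self]⟩,
    setIntegral_empty] at h

lemma integrable_tangentChain [IsFiniteMeasure ν] (hν : Integrable id ν) {N : ℕ} :
    Integrable (tangentChain g t N) ν :=
  integrable_affine_add_sum_call hν _ _ _ _ _ _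

lemma sub_tangentChain_le_add_indicator (hg : Monotone g) (hc : ConvexOn ℝ univ g)
    (ht : Monotone t) {δ : ℝ} (hδ : ∀ j, t (j + 1) - t j ≤ δ) {N : ℕ} (h0 : t 0 ≤ 0)
    (hN : 0 ≤ t N) (x : ℝ) :
    g x - tangentChain g t N x ≤ δ * (rightDeriv g (t N) - rightDeriv g (t 0)) +
      (Icc (t 0) (t N))ᶜ.indicator (fun x => rightDeriv g 0 * |x| + |g x| + |g 0|) x := by
  have hE := sub_tangentChain_le hc ht hδ ⟨ht (Nat.zero_le N), le_rfl⟩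
  by_cases hx : x ∈ Icc (t 0) (t N)
  · rw [indicator_of_notMem (notMem_compl_iff.2 hx), add_zero]
    exact sub_tangentChain_le hc ht hδ hx
  rw [indicator_of_mem (mem_compl hx)]
  have hδ0 : 0 ≤ δ := (sub_nonneg.2 (ht (Nat.le_succ 0))).trans (hδ 0)
  have hE0 := mul_nonneg hδ0 (sub_nonneg.2 (hc.monotone_rightDeriv (ht (Nat.zero_le N))))
  have hx0 := mul_nonneg (rightDeriv_nonneg hg 0) (abs_nonneg x)
  rcases not_and_or.1 hx with hlt | hgt
  · rw [not_le] at hlt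
    rw [tangentChain_of_le ht hlt.le]
    have hslope : rightDeriv g (t 0) * (t 0 - x) ≤ rightDeriv g 0 * |x| :=
      mul_le_mul (hc.monotone_rightDeriv h0) (by rw [abs_of_neg (hlt.trans_le h0)]; linarith)
        (by linarith) (rightDeriv_nonneg hg 0)
    linarith [hg hlt.le, abs_nonneg (g x), abs_nonneg (g 0)]
  · rw [not_le] at hgt
    rw [tangentChain_of_ge ht hgt.le]
    linarith [hg hN, mul_nonneg (rightDeriv_nonneg hg (t N)) (sub_nonneg.2 hgt.le),
      le_abs_self (g x), neg_abs_le (g 0)]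

lemma exists_tangentChain_integral_add_ge [IsProbabilityMeasure ν]
    (hν : Integrable id ν) (hg : Monotone g) (hc : ConvexOn ℝ univ g) (hgν : Integrable g ν)
    {ε : ℝ} (hε : 0 < ε) :
    ∃ (t : ℕ → ℝ) (N : ℕ), Monotone t ∧ ∫ x, g x ∂ν ≤ ∫ x, tangentChain g t N x ∂ν + ε := by
  set H : ℝ → ℝ := fun x => rightDeriv g 0 * |x| + |g x| + |g 0|
  have hH : Integrable H ν := ((hν.abs.const_mul _).add hgν.abs).add (integrable_const _)
  obtain ⟨r, hr, hr0⟩ : ∃ r : ℝ, ∫ x in (Icc (-r) r)ᶜ, H x ∂ν < ε / 2 ∧ 0 ≤ r :=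
    (((tendsto_setIntegral_compl_Icc hH).eventually (gt_mem_nhds (half_pos hε))).and
      (eventually_ge_atTop 0)).exists
  set Δ := rightDeriv g r - rightDeriv g (-r)
  have hΔ : 0 ≤ Δ := sub_nonneg.2 (hc.monotone_rightDeriv (by linarith))
  obtain ⟨N, hN⟩ := exists_nat_gt (2 * r * Δ / (ε / 2))
  have hN0 : (0 : ℝ) < N := (div_nonneg (by positivity) (by positivity)).trans_lt hN
  set t : ℕ → ℝ := fun j => -r + j * (2 * r / N)
  have ht : Monotone t := fun i j hij => by simp only [t]; gcongr
  have ht0 : t 0 = -r := by simp [t]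
  have htN : t N = r := by simp only [t]; field_simp; ring
  have hpt := sub_tangentChain_le_add_indicator hg hc ht (δ := 2 * r / N) (N := N)
    (fun j => le_of_eq (by simp only [t]; push_cast; ring)) (by linarith) (by linarith)
  rw [ht0, htN] at hpt
  have hE : 2 * r / N * Δ ≤ ε / 2 := by
    rw [div_lt_iff₀ (half_pos hε)] at hN
    rw [div_mul_eq_mul_div, div_le_iff₀ hN0]
    linarith
  have hT : Integrable (fun x => tangentChain g t N x) ν := integrable_tangentChain hν
  have hint : ∫ x, (g x - tangentChain g t N x) ∂ν ≤
      ∫ x, (2 * r / N * Δ + (Icc (-r) r)ᶜ.indicator H x) ∂ν :=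
    integral_mono (hgν.sub hT) ((integrable_const _).add (hH.indicator measurableSet_Icc.compl)) hpt
  rw [integral_sub hgν hT, integral_add (integrable_const _) (hH.indicator measurableSet_Icc.compl),
    integral_indicator measurableSet_Icc.compl, integral_const, probReal_univ, one_smul] at hint
  exact ⟨t, N, ht, by linarith⟩

variable {μ ρ : Measure ℝ} [IsProbabilityMeasure μ] [IsProbabilityMeasure ρ]

lemma integral_affine_add_sum_call_le {ι : Type*} (hμ : Integrable id μ) (hρ : Integrable id ρ)
    (hcall : ∀ K, callFn μ K ≤ callFn ρ K) (hmean : ∫ x, x ∂μ ≤ ∫ x, x ∂ρ) (α a : ℝ) {β : ℝ}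
    (hβ : 0 ≤ β) (s : Finset ι) {c : ι → ℝ} (hc : ∀ j ∈ s, 0 ≤ c j) (k : ι → ℝ) :
    ∫ x, (α + β * (x - a) + ∑ j ∈ s, c j * max (x - k j) 0) ∂μ ≤
      ∫ x, (α + β * (x - a) + ∑ j ∈ s, c j * max (x - k j) 0) ∂ρ := by
  rw [integral_affine_add_sum_call hμ, integral_affine_add_sum_call hρ]
  gcongr with j hj
  · exact hc j hj
  · exact hcall _

theorem integral_le_integral_of_callFn_le (hμ : Integrable id μ) (hρ : Integrable id ρ)
    (hcall : ∀ K, callFn μ K ≤ callFn ρ K) (hg : Monotone g) (hc : ConvexOn ℝ univ g)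
    (hgμ : Integrable g μ) (hgρ : Integrable g ρ) : ∫ x, g x ∂μ ≤ ∫ x, g x ∂ρ := by
  refine le_of_forall_pos_le_add fun ε hε => ?_
  obtain ⟨t, N, ht, happrox⟩ := exists_tangentChain_integral_add_ge hμ hg hc hgμ hε
  have hchain : ∫ x, tangentChain g t N x ∂μ ≤ ∫ x, tangentChain g t N x ∂ρ :=
    integral_affine_add_sum_call_le hμ hρ hcall (integral_id_le_of_callFn_le hμ hρ hcall) _ _
      (rightDeriv_nonneg hg _) _ (fun j _ => sub_nonneg.2 (hc.monotone_rightDeriv (ht j.le_succ))) _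
  linarith [integral_mono (integrable_tangentChain hρ) hgρ (tangentChain_le hc ht N)]

theorem icx_iff_callFn_le (hμ : Integrable id μ) (hρ : Integrable id ρ) :
    (∀ g : ℝ → ℝ, Monotone g → ConvexOn ℝ univ g → Integrable g μ → Integrable g ρ →
      ∫ x, g x ∂μ ≤ ∫ x, g x ∂ρ) ↔ ∀ K, callFn μ K ≤ callFn ρ K := by
  refine ⟨fun h K => h _ (fun x y hxy => max_le_max (sub_le_sub_right hxy K) le_rfl) ?_
    (hμ.sub (integrable_const K)).pos_part (hρ.sub (integrable_const K)).pos_part,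
    fun hcall _ hg hc => integral_le_integral_of_callFn_le hμ hρ hcall hg hc⟩
  exact ((convexOn_id convex_univ).sub (concaveOn_const K convex_univ)).sup
    (convexOn_const 0 convex_univ)

end IncreasingConvexOrder

theorem stmt_9 (μ ρ : Measure ℝ) [IsProbabilityMeasure μ] [IsProbabilityMeasure ρ]
    (hμ : Integrable id μ) (hρ : Integrable id ρ) :
    ((∀ l ∈ Ioo (0 : ℝ) 1, avar μ l ≤ avar ρ l) ↔ ∀ K : ℝ, callFn μ K ≤ callFn ρ K) ∧
    ((∀ y : ℝ, hlTransform μ (Ici y) ≤ hlTransform ρ (Ici y)) ↔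
      ∀ g : ℝ → ℝ, Monotone g → ConvexOn ℝ univ g → Integrable g μ → Integrable g ρ →
        ∫ s, g s ∂μ ≤ ∫ s, g s ∂ρ) :=
  ⟨avar_le_iff_callFn_le hμ hρ, (hlTransform_le_iff_avar_le hμ hρ).trans
    ((avar_le_iff_callFn_le hμ hρ).trans (icx_iff_callFn_le hμ hρ).symm)⟩
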